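/- Fix a₀ ∈ ℝ and define ψ(t) = √((2+a₀²)t² + 2a₀t + 1) for t ∈ ℝ. Then (2+a₀²)t² + 2a₀t + 1 > 0 for all t ∈ ℝ (so ψ is well-defined, positive, and smooth), and the functions V(t,x) = (ψ'(t)/ψ(t))·x and ρ(t,x) = ψ(t)³/(ψ(t)² + x²)² satisfy the one-dimensional continuity equation ∂_t ρ + ∂_x(ρV) = 0 at every (t,x) ∈ ℝ × ℝ. -/

import Mathlib

/-!
The continuity equation holds for `ρ = ψ³/(ψ² + x²)²`, `V = (ψ'/ψ) x` with *any* nonvanishing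
differentiable `ψ`: the chain rule gives `∂ₜρ = ψ' ψ² (3x² - ψ²)/(ψ² + x²)³`, and
`∂ₓ(ρV) = ψ' ψ² (ψ² - 3x²)/(ψ² + x²)³`. The specific `ψ` only has to be positive and differentiable,
which follows from `(2 + a₀²)t² + 2a₀t + 1 = (a₀t + 1)² + 2t² > 0`.
-/

/-- The time factor of the paper's explicit globally smooth 1D solution (γ = 3):
`ψ(t) = √((2+a₀²)t² + 2a₀t + 1)`. -/
noncomputable def psi (a₀ t : ℝ) : ℝ :=
  Real.sqrt ((2 + a₀ ^ 2) * t ^ 2 + 2 * a₀ * t + 1)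

lemma hasDerivAt_density (x : ℝ) {p : ℝ} (hp : p ≠ 0) :
    HasDerivAt (fun q : ℝ => q ^ 3 / (q ^ 2 + x ^ 2) ^ 2)
      (p ^ 2 * (3 * x ^ 2 - p ^ 2) / (p ^ 2 + x ^ 2) ^ 3) p := by
  have hden : p ^ 2 + x ^ 2 ≠ 0 := by positivity
  refine ((hasDerivAt_pow 3 p).fun_div (((hasDerivAt_pow 2 p).add_const (x ^ 2)).fun_pow 2)
    (pow_ne_zero 2 hden)).congr_deriv ?_
  norm_num
  field_simp
  ring

lemma hasDerivAt_density_mul_linear (c : ℝ) {p : ℝ} (hp : p ≠ 0) (x : ℝ) :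
    HasDerivAt (fun y : ℝ => p ^ 3 / (p ^ 2 + y ^ 2) ^ 2 * (c * y))
      (c * p ^ 3 * (p ^ 2 - 3 * x ^ 2) / (p ^ 2 + x ^ 2) ^ 3) x := by
  have hden : p ^ 2 + x ^ 2 ≠ 0 := by positivity
  have h := (((hasDerivAt_pow 2 x).const_add (p ^ 2)).fun_pow 2).inv (pow_ne_zero 2 hden)
    |>.const_mul (p ^ 3) |>.mul ((hasDerivAt_id' x).const_mul c)
  refine h.congr_deriv ?_
  norm_num
  field_simp
  ring

theorem continuity_equation_of_differentiableAt {ψ : ℝ → ℝ} {t : ℝ}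
    (hψ : DifferentiableAt ℝ ψ t) (h0 : ψ t ≠ 0) (x : ℝ) :
    deriv (fun s => ψ s ^ 3 / (ψ s ^ 2 + x ^ 2) ^ 2) t
      + deriv (fun y => ψ t ^ 3 / (ψ t ^ 2 + y ^ 2) ^ 2 * (deriv ψ t / ψ t * y)) x = 0 := by
  have h_time : HasDerivAt (fun s => ψ s ^ 3 / (ψ s ^ 2 + x ^ 2) ^ 2)
      (ψ t ^ 2 * (3 * x ^ 2 - ψ t ^ 2) / (ψ t ^ 2 + x ^ 2) ^ 3 * deriv ψ t) t :=
    (hasDerivAt_density x h0).comp t hψ.hasDerivAt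
  rw [h_time.deriv, (hasDerivAt_density_mul_linear _ h0 x).deriv]
  field_simp
  ring

lemma psi_radicand_pos (a₀ t : ℝ) : 0 < (2 + a₀ ^ 2) * t ^ 2 + 2 * a₀ * t + 1 := by
  rcases eq_or_ne t 0 with rfl | ht
  · norm_num
  · nlinarith [sq_nonneg (a₀ * t + 1), sq_pos_of_ne_zero ht]

lemma psi_pos (a₀ t : ℝ) : 0 < psi a₀ t := Real.sqrt_pos.mpr (psi_radicand_pos a₀ t)

lemma differentiableAt_psi (a₀ t : ℝ) : DifferentiableAt ℝ (psi a₀) t :=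
  (by fun_prop : DifferentiableAt ℝ (fun s => (2 + a₀ ^ 2) * s ^ 2 + 2 * a₀ * s + 1) t).sqrt
    (psi_radicand_pos a₀ t).ne'

/-- mass conservation for the explicit solution (16).
The quadratic under the root is everywhere positive, and
`ρ(t,x) = ψ³/(ψ²+x²)²`, `V(t,x) = (ψ'/ψ)x` satisfy `∂ₜρ + ∂ₓ(ρV) = 0`. -/
theorem stmt9 (a₀ : ℝ) :
    (∀ t : ℝ, 0 < (2 + a₀ ^ 2) * t ^ 2 + 2 * a₀ * t + 1) ∧
    ∀ t x : ℝ,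
      deriv (fun s => (psi a₀ s) ^ 3 / ((psi a₀ s) ^ 2 + x ^ 2) ^ 2) t
        + deriv (fun y =>
            ((psi a₀ t) ^ 3 / ((psi a₀ t) ^ 2 + y ^ 2) ^ 2)
              * ((deriv (psi a₀) t / psi a₀ t) * y)) x = 0 :=
  ⟨psi_radicand_pos a₀, fun t =>
    continuity_equation_of_differentiableAt (differentiableAt_psi a₀ t) (psi_pos a₀ t).ne'⟩
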